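/- Let r and ℓ be positive integers. If G is a finite nonempty simple graph with rk_r(G) ≤ ℓ, then for every vertex c of G the number of vertices s of G[N_r[c]] that are r-progressing against c is at most (2r+1)^(2^(ℓ-1)-1). -/

import Mathlib

open Classical

/-- The closed `r`-neighborhood of `c` inside the induced subgraph `G[A]`:
all vertices of `A` joined to `c` by a walk of length at most `r` staying in `A`. -/
noncomputable def ball {V : Type*} (G : SimpleGraph V) (r : ℕ) (A : Finset V) (c : V) :
    Finset V :=
  A.filter (fun v => ∃ p : G.Walk c v, p.length ≤ r ∧ ∀ x ∈ p.support, x ∈ A)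

/-- The `r`-splitter rank of the induced subgraph `G[A]` (with `rank ∅ = 0`). -/
noncomputable def splitterRank {V : Type*} [DecidableEq V] (G : SimpleGraph V) (r : ℕ)
    (A : Finset V) : ℕ :=
  if _ : A.Nonempty then
    1 + A.attach.sup (fun c =>
      (ball G r A c.1).attach.inf'
        (Finset.attach_nonempty_iff.2 ⟨c.1, Finset.mem_filter.2 ⟨c.2,
          SimpleGraph.Walk.nil, by simp, by simp [c.2]⟩⟩)
        (fun s => splitterRank G r ((ball G r A c.1).erase s.1)))
  else 0
termination_by A.card
decreasing_by
  exact lt_of_lt_of_le (Finset.card_erase_lt_of_mem s.2)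
    (Finset.card_le_card (Finset.filter_subset _ _))

/-!
Let `X` be rank-critical (deleting any vertex lowers the rank) of rank `m + 1`. Against an
optimal Connector move `c`, criticality forces `N_r[c] = X` in `G[X]`, and every Splitter reply
leaves rank at least `m`. So `X - c` contains a critical set `W` of rank `m`, and for each
`t ∈ W` the set `X - t` contains a critical set `F t` of rank `m`. Joining `c` to every vertex of
`W ∪ ⋃ F t` by a walk of length `≤ r` gives `U ⊆ X` in which `c` still forces rank `m + 1`,
whence `U = X` and `|X| ≤ 1 + r (T + T²) ≤ (2r + 1) T²` for `T` a bound on critical sets of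
rank `m`. Finally, every progressing move against `c` lies in each critical subset of
`N_r[c]` of full rank.
-/

open Finset

section

variable {V : Type*} {G : SimpleGraph V} {r : ℕ}

theorem mem_ball {A : Finset V} {c v : V} :
    v ∈ ball G r A c ↔ v ∈ A ∧ ∃ p : G.Walk c v, p.length ≤ r ∧ ∀ x ∈ p.support, x ∈ A :=
  mem_filter

theorem ball_subset {A : Finset V} {c : V} : ball G r A c ⊆ A :=
  filter_subset _ _

theorem mem_ball_self {A : Finset V} {c : V} (hc : c ∈ A) : c ∈ ball G r A c :=
  mem_ball.2 ⟨hc, .nil, by simp, by simpa using hc⟩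

theorem ball_mono {A B : Finset V} {c : V} (h : A ⊆ B) : ball G r A c ⊆ ball G r B c :=
  fun _ hx ↦
    let ⟨hxA, p, hp, hpA⟩ := mem_ball.1 hx
    mem_ball.2 ⟨h hxA, p, hp, fun y hy ↦ h (hpA y hy)⟩

theorem mem_ball_of_mem_support {A : Finset V} {c v x : V} (p : G.Walk c v)
    (hp : p.length ≤ r) (hpA : ∀ y ∈ p.support, y ∈ A) (hx : x ∈ p.support) :
    x ∈ ball G r A c :=
  mem_ball.2 ⟨hpA x hx, p.takeUntil x hx, (p.length_takeUntil_le_length hx).trans hp,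
    fun y hy ↦ hpA y (p.support_takeUntil_subset_support hx hy)⟩

theorem ball_erase_of_notMem_ball [DecidableEq V] {A : Finset V} {c v : V}
    (hv : v ∉ ball G r A c) : ball G r (A.erase v) c = ball G r A c := by
  refine (ball_mono (erase_subset _ _)).antisymm fun x hx ↦ ?_
  obtain ⟨hxA, p, hp, hpA⟩ := mem_ball.1 hx
  have hpA' : ∀ y ∈ p.support, y ∈ A.erase v := fun y hy ↦
    mem_erase.2 ⟨fun h ↦ hv (h ▸ mem_ball_of_mem_support p hp hpA hy), hpA y hy⟩
  exact mem_ball.2 ⟨hpA' x p.end_mem_support, p, hp, hpA'⟩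

theorem exists_ball_eq_self_of_subset_ball [DecidableEq V] {X S : Finset V} {c : V}
    (hc : c ∈ X) (hS : S ⊆ ball G r X c) :
    ∃ U ⊆ X, c ∈ U ∧ S ⊆ U ∧ ball G r U c = U ∧ #U ≤ 1 + r * #S := by
  induction S using Finset.induction_on with
  | empty => exact ⟨{c}, by simpa using hc, mem_singleton_self c, empty_subset _,
      ball_subset.antisymm (by simpa using mem_ball_self (mem_singleton_self c)), by simp⟩
  | insert a S haS ih =>
    obtain ⟨U, hUX, hcU, hSU, hUball, hUcard⟩ := ih ((subset_insert a S).trans hS)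
    obtain ⟨-, p, hp, hpX⟩ := mem_ball.1 (hS (mem_insert_self a S))
    set P := p.support.toFinset
    have hPX : P ⊆ X := fun y hy ↦ hpX y (List.mem_toFinset.1 hy)
    have hPball : P ⊆ ball G r (U ∪ P) c := fun x hx ↦
      mem_ball_of_mem_support p hp (fun y hy ↦ mem_union_right _ (List.mem_toFinset.2 hy))
        (List.mem_toFinset.1 hx)
    have hUball' : U ⊆ ball G r (U ∪ P) c :=
      hUball.symm.subset.trans (ball_mono subset_union_left)
    have hcard : #(U ∪ P) ≤ #U + r := by
      have hP : #P ≤ r + 1 := p.support.toFinset_card_le.trans (by simp [hp])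
      have hcUP : 1 ≤ #(U ∩ P) := card_pos.2 ⟨c, mem_inter.2 ⟨hcU, by simp [P]⟩⟩
      have := card_union_add_card_inter U P
      omega
    refine ⟨U ∪ P, union_subset hUX hPX, mem_union_left _ hcU,
      insert_subset (mem_union_right _ (by simp [P])) (hSU.trans subset_union_left),
      ball_subset.antisymm (union_subset hUball' hPball), ?_⟩
    rw [card_insert_of_notMem haS]
    linarith

theorem exists_erase_subset_erase {α : Type*} [DecidableEq α] {S T : Finset α} (hST : S ⊆ T)
    (hS : S.Nonempty) (t : α) : ∃ s ∈ S, S.erase s ⊆ T.erase t := by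
  by_cases ht : t ∈ S
  · exact ⟨t, ht, erase_subset_erase t hST⟩
  · obtain ⟨s, hs⟩ := hS
    exact ⟨s, hs, subset_erase.2 ⟨(erase_subset s S).trans hST, fun h ↦ ht (mem_of_mem_erase h)⟩⟩

variable [DecidableEq V]

theorem splitterRank_empty : splitterRank G r ∅ = 0 := by
  rw [splitterRank, dif_neg (by simp)]

theorem splitterRank_pos {A : Finset V} (hA : A.Nonempty) : 0 < splitterRank G r A := by
  rw [splitterRank, dif_pos hA]
  omega

theorem splitterRank_eq_zero_iff {A : Finset V} : splitterRank G r A = 0 ↔ A = ∅ := by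
  refine ⟨fun h ↦ ?_, fun h ↦ h ▸ splitterRank_empty⟩
  by_contra hA
  exact (splitterRank_pos (nonempty_iff_ne_empty.2 hA)).ne' h

theorem succ_le_splitterRank {A : Finset V} {c : V} (hc : c ∈ A) {m : ℕ}
    (h : ∀ s ∈ ball G r A c, m ≤ splitterRank G r ((ball G r A c).erase s)) :
    m + 1 ≤ splitterRank G r A := by
  rw [splitterRank, dif_pos ⟨c, hc⟩, add_comm m, add_le_add_iff_left]
  exact le_sup_of_le (mem_attach A ⟨c, hc⟩) (le_inf' _ _ fun s _ ↦ h s.1 s.2)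

theorem splitterRank_le_succ {A : Finset V} (hA : A.Nonempty) {m : ℕ}
    (h : ∀ c ∈ A, ∃ s ∈ ball G r A c, splitterRank G r ((ball G r A c).erase s) ≤ m) :
    splitterRank G r A ≤ m + 1 := by
  rw [splitterRank, dif_pos hA, add_comm m, add_le_add_iff_left]
  refine Finset.sup_le fun c _ ↦ ?_
  obtain ⟨s, hs, hsm⟩ := h c.1 c.2
  exact (inf'_le _ (mem_attach _ ⟨s, hs⟩)).trans hsm

theorem exists_splitterRank_erase_lt {A : Finset V} {c : V} (hc : c ∈ A) :
    ∃ t ∈ ball G r A c, splitterRank G r ((ball G r A c).erase t) < splitterRank G r A := by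
  by_contra! h
  exact (succ_le_splitterRank hc h).not_gt (lt_add_one _)

theorem exists_splitterRank_le_erase_add_one {A : Finset V} (hA : A.Nonempty) :
    ∃ c ∈ A, ∀ s ∈ ball G r A c,
      splitterRank G r A ≤ splitterRank G r ((ball G r A c).erase s) + 1 := by
  by_contra! h
  obtain ⟨c, hc⟩ := hA
  obtain ⟨_, -, hA2⟩ := h c hc
  have := splitterRank_le_succ ⟨c, hc⟩ (m := splitterRank G r A - 2) fun c hc ↦
    let ⟨s, hs, hlt⟩ := h c hc
    ⟨s, hs, by omega⟩
  omega

theorem splitterRank_mono {A B : Finset V} (hAB : A ⊆ B) :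
    splitterRank G r A ≤ splitterRank G r B := by
  induction B using Finset.strongInduction generalizing A with
  | H B ih =>
  rcases A.eq_empty_or_nonempty with rfl | hA
  · simp [splitterRank_empty]
  obtain ⟨m, hm⟩ := Nat.exists_eq_add_one.2 (splitterRank_pos (G := G) (r := r) (hA.mono hAB))
  rw [hm]
  refine splitterRank_le_succ hA fun c hc ↦ ?_
  obtain ⟨t, ht, hlt⟩ := exists_splitterRank_erase_lt (G := G) (r := r) (hAB hc)
  obtain ⟨s, hs, hsub⟩ := exists_erase_subset_erase (ball_mono hAB) ⟨c, mem_ball_self hc⟩ t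
  exact ⟨s, hs, (ih _ ((erase_ssubset ht).trans_subset ball_subset) hsub).trans (by omega)⟩

theorem splitterRank_le_erase_add_one (A : Finset V) (v : V) :
    splitterRank G r A ≤ splitterRank G r (A.erase v) + 1 := by
  rcases A.eq_empty_or_nonempty with rfl | hA
  · simp [splitterRank_empty]
  refine splitterRank_le_succ hA fun c hc ↦ ?_
  obtain ⟨s, hs, hsub⟩ := exists_erase_subset_erase ball_subset ⟨c, mem_ball_self hc⟩ v
  exact ⟨s, hs, splitterRank_mono hsub⟩

theorem splitterRank_le_erase_of_notMem_ball {A : Finset V} {c v : V} (hc : c ∈ A)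
    (hopt : ∀ s ∈ ball G r A c,
      splitterRank G r A ≤ splitterRank G r ((ball G r A c).erase s) + 1)
    (hv : v ∉ ball G r A c) : splitterRank G r A ≤ splitterRank G r (A.erase v) := by
  have hcv : c ∈ A.erase v := mem_erase.2 ⟨fun h ↦ hv (h ▸ mem_ball_self hc), hc⟩
  have := succ_le_splitterRank hcv (m := splitterRank G r A - 1) fun s hs ↦ by
    rw [ball_erase_of_notMem_ball hv] at hs ⊢
    have := hopt s hs
    omega
  omega

theorem mem_of_splitterRank_erase_lt {W B : Finset V} {s : V} (hWB : W ⊆ B)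
    (hW : splitterRank G r B ≤ splitterRank G r W)
    (hs : splitterRank G r (B.erase s) < splitterRank G r B) : s ∈ W := by
  by_contra hsW
  exact (hW.trans (splitterRank_mono (subset_erase.2 ⟨hWB, hsW⟩))).not_gt hs

variable (G r) in
def IsRankCritical (X : Finset V) : Prop :=
  ∀ v ∈ X, splitterRank G r (X.erase v) < splitterRank G r X

theorem exists_isRankCritical_subset {B : Finset V} {m : ℕ} (h : m ≤ splitterRank G r B) :
    ∃ W ⊆ B, IsRankCritical G r W ∧ splitterRank G r W = m := by
  obtain ⟨W, hW, hmin⟩ := exists_min_image (B.powerset.filter fun W ↦ m ≤ splitterRank G r W)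
    card ⟨B, by simpa using h⟩
  rw [mem_filter, mem_powerset] at hW
  have herase : ∀ w ∈ W, splitterRank G r (W.erase w) < m := fun w hw ↦ by
    by_contra! hle
    have := hmin _ (mem_filter.2 ⟨mem_powerset.2 ((erase_subset w W).trans hW.1), hle⟩)
    exact this.not_gt (card_erase_lt_of_mem hw)
  have hWm : splitterRank G r W = m := by
    rcases W.eq_empty_or_nonempty with rfl | ⟨w, hw⟩
    · have := hW.2
      rw [splitterRank_empty] at this ⊢
      omega
    · have := splitterRank_le_erase_add_one (G := G) (r := r) W w
      have := herase w hw
      omega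
  exact ⟨W, hW.1, fun w hw ↦ hWm ▸ herase w hw, hWm⟩

theorem pow_two_pow_succ_sub_one {M : Type*} [Monoid M] (a : M) (n : ℕ) :
    a ^ (2 ^ (n + 1) - 1) = a * (a ^ (2 ^ n - 1) * a ^ (2 ^ n - 1)) := by
  rw [← pow_add, ← pow_succ']
  have := n.one_le_two_pow
  congr 1
  omega

namespace IsRankCritical

theorem subset_of_le_splitterRank {X U : Finset V} (hX : IsRankCritical G r X) (hUX : U ⊆ X)
    (h : splitterRank G r X ≤ splitterRank G r U) : X ⊆ U :=
  fun _ hv ↦ mem_of_splitterRank_erase_lt hUX h (hX _ hv)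

theorem ball_eq_self {X : Finset V} {c : V} (hX : IsRankCritical G r X) (hc : c ∈ X)
    (hopt : ∀ s ∈ ball G r X c,
      splitterRank G r X ≤ splitterRank G r ((ball G r X c).erase s) + 1) :
    ball G r X c = X :=
  ball_subset.antisymm fun v hv ↦ by
    by_contra hvb
    exact (splitterRank_le_erase_of_notMem_ball hc hopt hvb).not_gt (hX v hv)

theorem card_le_of_splitterRank_eq_succ {X : Finset V} {m T : ℕ} (hX : IsRankCritical G r X)
    (hXm : splitterRank G r X = m + 1)
    (hT : ∀ W, IsRankCritical G r W → splitterRank G r W = m → #W ≤ T) :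
    #X ≤ 1 + r * (T + T * T) := by
  have hXne : X.Nonempty := nonempty_iff_ne_empty.2 fun h ↦ by
    simp [h, splitterRank_empty] at hXm
  obtain ⟨c, hcX, hopt⟩ := exists_splitterRank_le_erase_add_one (G := G) (r := r) hXne
  have hball := hX.ball_eq_self hcX hopt
  have hlarge : ∀ t ∈ X, m ≤ splitterRank G r (X.erase t) := fun t ht ↦ by
    have := hopt t (by rwa [hball])
    rw [hball] at this
    omega
  obtain ⟨W, hWX, hW, hWm⟩ := exists_isRankCritical_subset (hlarge c hcX)
  choose! F hFX hF hFm using fun t (ht : t ∈ W) ↦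
    exists_isRankCritical_subset (hlarge t (mem_of_mem_erase (hWX ht)))
  set S := W ∪ W.biUnion F
  have hScard : #S ≤ T + T * T :=
    calc #S ≤ #W + ∑ t ∈ W, #(F t) := (card_union_le _ _).trans (by gcongr; exact card_biUnion_le)
      _ ≤ T + #W * T := by
        gcongr
        · exact hT W hW hWm
        · exact sum_le_card_nsmul _ _ _ fun t ht ↦ hT _ (hF t ht) (hFm t ht)
      _ ≤ T + T * T := by gcongr; exact hT W hW hWm
  have hSX : S ⊆ X := union_subset (hWX.trans (erase_subset _ _))
    (biUnion_subset.2 fun t ht ↦ (hFX t ht).trans (erase_subset _ _))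
  obtain ⟨U, hUX, hcU, hSU, hUball, hUcard⟩ :=
    exists_ball_eq_self_of_subset_ball hcX (hball.symm ▸ hSX)
  -- Every Splitter reply `s` to `c` in `G[U]` leaves a critical set of rank `m`: `W` or `F s`.
  have hUm : m + 1 ≤ splitterRank G r U := by
    refine succ_le_splitterRank hcU fun s hs ↦ ?_
    rw [hUball] at hs ⊢
    by_cases hsW : s ∈ W
    · have hFs : F s ⊆ U := ((subset_biUnion_of_mem F hsW).trans subset_union_right).trans hSU
      exact (hFm s hsW).ge.trans (splitterRank_mono (subset_erase.2
        ⟨hFs, fun h ↦ notMem_erase s X (hFX s hsW h)⟩))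
    · exact hWm.ge.trans (splitterRank_mono (subset_erase.2 ⟨subset_union_left.trans hSU, hsW⟩))
  calc #X ≤ #U := card_le_card (hX.subset_of_le_splitterRank hUX (hXm ▸ hUm))
    _ ≤ 1 + r * #S := hUcard
    _ ≤ 1 + r * (T + T * T) := by gcongr

theorem card_le_of_splitterRank_eq {X : Finset V} (hX : IsRankCritical G r X) :
    ∀ {n : ℕ}, splitterRank G r X = n → #X ≤ (2 * r + 1) ^ (2 ^ (n - 1) - 1)
  | 0, hXn => by simp [splitterRank_eq_zero_iff.1 hXn]
  | 1, hXn => by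
    simpa using hX.card_le_of_splitterRank_eq_succ (T := 0) hXn fun W _ hW ↦ by
      simp [splitterRank_eq_zero_iff.1 hW]
  | n + 2, hXn => by
    set T := (2 * r + 1) ^ (2 ^ n - 1)
    have hT : 1 ≤ T := Nat.one_le_pow _ _ (by omega)
    calc #X ≤ 1 + r * (T + T * T) :=
          hX.card_le_of_splitterRank_eq_succ hXn fun W hW hWn ↦ hW.card_le_of_splitterRank_eq hWn
      _ ≤ (2 * r + 1) * (T * T) := by
        nlinarith [Nat.mul_le_mul hT hT, Nat.mul_le_mul_left r (Nat.le_mul_of_pos_left T hT)]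
      _ = (2 * r + 1) ^ (2 ^ (n + 2 - 1) - 1) := (pow_two_pow_succ_sub_one _ n).symm

end IsRankCritical

end

theorem progressing_moves_bound_of_rank_le_general {V : Type*} [Fintype V] [DecidableEq V]
    (G : SimpleGraph V) (r ℓ : ℕ)
    (hk : splitterRank G r Finset.univ ≤ ℓ) (c : V) :
    ((ball G r Finset.univ c).filter (fun s =>
        splitterRank G r ((ball G r Finset.univ c).erase s) <
          splitterRank G r (ball G r Finset.univ c))).card
      ≤ (2 * r + 1) ^ (2 ^ (ℓ - 1) - 1) := by
  set B := ball G r univ c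
  obtain ⟨W, hWB, hW, hWrank⟩ := exists_isRankCritical_subset (le_refl (splitterRank G r B))
  have hBℓ : splitterRank G r B ≤ ℓ := (splitterRank_mono (subset_univ B)).trans hk
  calc #(B.filter _) ≤ #W := card_le_card fun s hs ↦
        mem_of_splitterRank_erase_lt hWB hWrank.ge (mem_filter.1 hs).2
    _ ≤ (2 * r + 1) ^ (2 ^ (splitterRank G r B - 1) - 1) := hW.card_le_of_splitterRank_eq hWrank
    _ ≤ (2 * r + 1) ^ (2 ^ (ℓ - 1) - 1) := by gcongr <;> omega

/-- If `rk_r(G) ≤ ℓ`, then for every Connector move `c` there are at most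
`(2r+1)^(2^(ℓ-1)-1)` vertices of `G[N_r[c]]` that are `r`-progressing against `c`. -/
theorem progressing_moves_bound_of_rank_le {V : Type*} [Fintype V] [DecidableEq V] [Nonempty V]
    (G : SimpleGraph V) (r ℓ : ℕ) (hr : 0 < r) (hℓ : 0 < ℓ)
    (hk : splitterRank G r Finset.univ ≤ ℓ) (c : V) :
    ((ball G r Finset.univ c).filter (fun s =>
        splitterRank G r ((ball G r Finset.univ c).erase s) <
          splitterRank G r (ball G r Finset.univ c))).card
      ≤ (2 * r + 1) ^ (2 ^ (ℓ - 1) - 1) :=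
  progressing_moves_bound_of_rank_le_general G r ℓ hk c
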